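/- arXiv:2411.00778 — 3 statements merged into one kernel-verified Lean document; each statement's English description precedes it below -/
import Mathlib

section
/- Let Λ and Γ be g-fusion Bessel sequences in H and let S_{Λ,Γ} f = Σ_{i∈I} v_i² P_{W_i} Γ_i* Λ_i P_{V_i} f be the bi-g-fusion frame operator. Then the following are equivalent: (i) S_{Λ,Γ} is bounded below, i.e., there exists c > 0 such that ‖S_{Λ,Γ} f‖ ≥ c‖f‖ for all f ∈ H; (ii) there exists a bounded linear operator K : H → H such that the operators T_i = v_i² K P_{W_i} Γ_i* Λ_i P_{V_i} form a resolution of the identity on H, i.e., for every f ∈ H the family (T_i f)_{i∈I} is summable with Σ_{i∈I} T_i f = f. -/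
open scoped RealInnerProductSpace

/-- The orthogonal projection of `H` onto a subspace `V`, viewed as a map `H →L[ℝ] H`. -/
noncomputable def proj {H : Type*} [NormedAddCommGroup H]
    [InnerProductSpace ℝ H] (V : Submodule ℝ H) [V.HasOrthogonalProjection] : H →L[ℝ] H :=
  V.subtypeL.comp V.orthogonalProjectionOnto

/-- `{(V i, Λ i, v i)}_{i ∈ I}` is a g-fusion Bessel sequence in `H` with bound `B`:
for every `f ∈ H`, `Σ_i (v i)² ‖Λ i (P_{V i} f)‖² ≤ B ‖f‖²` (the series being summable). -/
def GFusionBessel {H : Type*} [NormedAddCommGroup H] [InnerProductSpace ℝ H]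
    {I : Type*} {K : I → Type*} [∀ i, NormedAddCommGroup (K i)]
    [∀ i, InnerProductSpace ℝ (K i)]
    (V : I → Submodule ℝ H) [∀ i, CompleteSpace (V i)] (v : I → ℝ)
    (Λ : ∀ i, H →L[ℝ] K i) (B : ℝ) : Prop :=
  ∀ f : H, Summable (fun i => v i ^ 2 * ‖Λ i (proj (V i) f)‖ ^ 2) ∧
    ∑' i, v i ^ 2 * ‖Λ i (proj (V i) f)‖ ^ 2 ≤ B * ‖f‖ ^ 2

/-- The pair `({(V i, Λ i, v i)}, {(W i, Γ i, v i)})` is a bi-g-fusion frame for `H` with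
bounds `0 < A ≤ B`: for every `f ∈ H` the family `(v i)² ⟪Λ i (P_{V i} f), Γ i (P_{W i} f)⟫`
is summable with `A ‖f‖² ≤ Σ_i (v i)² ⟪Λ i (P_{V i} f), Γ i (P_{W i} f)⟫ ≤ B ‖f‖²`. -/
def BiGFusionFrame {H : Type*} [NormedAddCommGroup H] [InnerProductSpace ℝ H]
    {I : Type*} {K : I → Type*} [∀ i, NormedAddCommGroup (K i)]
    [∀ i, InnerProductSpace ℝ (K i)]
    (V W : I → Submodule ℝ H) [∀ i, CompleteSpace (V i)] [∀ i, CompleteSpace (W i)]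
    (v : I → ℝ) (Λ Γ : ∀ i, H →L[ℝ] K i) (A B : ℝ) : Prop :=
  0 < A ∧ A ≤ B ∧ ∀ f : H,
    Summable (fun i => v i ^ 2 * ⟪Λ i (proj (V i) f), Γ i (proj (W i) f)⟫) ∧
    A * ‖f‖ ^ 2 ≤ ∑' i, v i ^ 2 * ⟪Λ i (proj (V i) f), Γ i (proj (W i) f)⟫ ∧
    ∑' i, v i ^ 2 * ⟪Λ i (proj (V i) f), Γ i (proj (W i) f)⟫ ≤ B * ‖f‖ ^ 2

section Aux

variable {H : Type*} [NormedAddCommGroup H] [InnerProductSpace ℝ H] [CompleteSpace H]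
  {I : Type*} {K : I → Type*} [∀ i, NormedAddCommGroup (K i)]
  [∀ i, InnerProductSpace ℝ (K i)] [∀ i, CompleteSpace (K i)]
  (V W : I → Submodule ℝ H) [∀ i, CompleteSpace (V i)] [∀ i, CompleteSpace (W i)]
  (v : I → ℝ) (Λ Γ : ∀ i, H →L[ℝ] K i)

/-- The summand of the bi-g-fusion frame operator. -/
noncomputable def gterm (f : H) (i : I) : H :=
  v i ^ 2 • proj (W i) (ContinuousLinearMap.adjoint (Γ i) (Λ i (proj (V i) f)))

lemma gterm_inner (f u : H) (i : I) :
    ⟪gterm V W v Λ Γ f i, u⟫ = v i ^ 2 * ⟪Λ i (proj (V i) f), Γ i (proj (W i) u)⟫ := by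
  unfold gterm
  rw [real_inner_smul_left]
  congr 1
  have h1 : ⟪proj (W i) (ContinuousLinearMap.adjoint (Γ i) (Λ i (proj (V i) f))), u⟫
      = ⟪ContinuousLinearMap.adjoint (Γ i) (Λ i (proj (V i) f)), proj (W i) u⟫ :=
    Submodule.inner_starProjection_left_eq_right (W i) _ _
  rw [h1, ContinuousLinearMap.adjoint_inner_left]

lemma gterm_finset_bound {B₂ : ℝ} (hΓ : GFusionBessel W v Γ B₂) (f : H) (t : Finset I) :
    ‖∑ i ∈ t, gterm V W v Λ Γ f i‖ ≤
      Real.sqrt (max B₂ 0) * Real.sqrt (∑ i ∈ t, v i ^ 2 * ‖Λ i (proj (V i) f)‖ ^ 2) := by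
  set u := ∑ i ∈ t, gterm V W v Λ Γ f i with hu
  have hnn : (0:ℝ) ≤ Real.sqrt (max B₂ 0) *
      Real.sqrt (∑ i ∈ t, v i ^ 2 * ‖Λ i (proj (V i) f)‖ ^ 2) := by positivity
  rcases eq_or_lt_of_le (norm_nonneg u) with h0 | h0
  · rw [← h0]; exact hnn
  have hsq : ‖u‖ ^ 2 = ∑ i ∈ t, ⟪gterm V W v Λ Γ f i, u⟫ := by
    rw [← real_inner_self_eq_norm_sq, hu, sum_inner]
  have hstep : ∑ i ∈ t, ⟪gterm V W v Λ Γ f i, u⟫ ≤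
      ∑ i ∈ t, Real.sqrt (v i ^ 2 * ‖Λ i (proj (V i) f)‖ ^ 2) *
        Real.sqrt (v i ^ 2 * ‖Γ i (proj (W i) u)‖ ^ 2) := by
    refine Finset.sum_le_sum fun i _ => ?_
    rw [gterm_inner]
    have hcs := real_inner_le_norm (Λ i (proj (V i) f)) (Γ i (proj (W i) u))
    have hvv : (0:ℝ) ≤ v i ^ 2 := sq_nonneg _
    calc v i ^ 2 * ⟪Λ i (proj (V i) f), Γ i (proj (W i) u)⟫
        ≤ v i ^ 2 * (‖Λ i (proj (V i) f)‖ * ‖Γ i (proj (W i) u)‖) :=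
          mul_le_mul_of_nonneg_left hcs hvv
      _ = (Real.sqrt (v i ^ 2) * Real.sqrt (v i ^ 2)) *
            (‖Λ i (proj (V i) f)‖ * ‖Γ i (proj (W i) u)‖) := by
          rw [Real.mul_self_sqrt hvv]
      _ = Real.sqrt (v i ^ 2 * ‖Λ i (proj (V i) f)‖ ^ 2) *
            Real.sqrt (v i ^ 2 * ‖Γ i (proj (W i) u)‖ ^ 2) := by
          rw [Real.sqrt_mul hvv, Real.sqrt_mul hvv, Real.sqrt_sq (norm_nonneg _),
            Real.sqrt_sq (norm_nonneg _)]
          ring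
  have hcs2 := Real.sum_sqrt_mul_sqrt_le t
    (f := fun i => v i ^ 2 * ‖Λ i (proj (V i) f)‖ ^ 2)
    (g := fun i => v i ^ 2 * ‖Γ i (proj (W i) u)‖ ^ 2)
    (fun i => by positivity) (fun i => by positivity)
  have hb : ∑ i ∈ t, v i ^ 2 * ‖Γ i (proj (W i) u)‖ ^ 2 ≤ max B₂ 0 * ‖u‖ ^ 2 := by
    have h1 := (hΓ u).1
    have h2 := (hΓ u).2
    have h3 : ∑ i ∈ t, v i ^ 2 * ‖Γ i (proj (W i) u)‖ ^ 2 ≤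
        ∑' i, v i ^ 2 * ‖Γ i (proj (W i) u)‖ ^ 2 :=
      Summable.sum_le_tsum t (fun i _ => by positivity) h1
    have h4 : B₂ * ‖u‖ ^ 2 ≤ max B₂ 0 * ‖u‖ ^ 2 :=
      mul_le_mul_of_nonneg_right (le_max_left _ _) (by positivity)
    linarith
  have hbs : Real.sqrt (∑ i ∈ t, v i ^ 2 * ‖Γ i (proj (W i) u)‖ ^ 2) ≤
      Real.sqrt (max B₂ 0) * ‖u‖ := by
    calc Real.sqrt (∑ i ∈ t, v i ^ 2 * ‖Γ i (proj (W i) u)‖ ^ 2)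
        ≤ Real.sqrt (max B₂ 0 * ‖u‖ ^ 2) := Real.sqrt_le_sqrt hb
      _ = Real.sqrt (max B₂ 0) * ‖u‖ := by
          rw [Real.sqrt_mul (le_max_right B₂ 0), Real.sqrt_sq (norm_nonneg u)]
  have hfin : ‖u‖ ^ 2 ≤ (Real.sqrt (max B₂ 0) *
      Real.sqrt (∑ i ∈ t, v i ^ 2 * ‖Λ i (proj (V i) f)‖ ^ 2)) * ‖u‖ := by
    calc ‖u‖ ^ 2 = ∑ i ∈ t, ⟪gterm V W v Λ Γ f i, u⟫ := hsq
      _ ≤ ∑ i ∈ t, Real.sqrt (v i ^ 2 * ‖Λ i (proj (V i) f)‖ ^ 2) *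
            Real.sqrt (v i ^ 2 * ‖Γ i (proj (W i) u)‖ ^ 2) := hstep
      _ ≤ Real.sqrt (∑ i ∈ t, v i ^ 2 * ‖Λ i (proj (V i) f)‖ ^ 2) *
            Real.sqrt (∑ i ∈ t, v i ^ 2 * ‖Γ i (proj (W i) u)‖ ^ 2) := hcs2
      _ ≤ Real.sqrt (∑ i ∈ t, v i ^ 2 * ‖Λ i (proj (V i) f)‖ ^ 2) *
            (Real.sqrt (max B₂ 0) * ‖u‖) :=
          mul_le_mul_of_nonneg_left hbs (Real.sqrt_nonneg _)
      _ = (Real.sqrt (max B₂ 0) *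
            Real.sqrt (∑ i ∈ t, v i ^ 2 * ‖Λ i (proj (V i) f)‖ ^ 2)) * ‖u‖ := by ring
  nlinarith [hfin, h0]

lemma summable_gterm {B₁ B₂ : ℝ} (hΛ : GFusionBessel V v Λ B₁)
    (hΓ : GFusionBessel W v Γ B₂) (f : H) : Summable (gterm V W v Λ Γ f) := by
  rw [summable_iff_vanishing_norm]
  intro ε hε
  set C := Real.sqrt (max B₂ 0) + 1 with hC
  have hC0 : (0:ℝ) < C := by positivity
  have hδ : (0:ℝ) < (ε / C) ^ 2 := by positivity
  obtain ⟨s, hs⟩ := summable_iff_vanishing_norm.1 (hΛ f).1 ((ε / C) ^ 2) hδ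
  refine ⟨s, fun t ht => ?_⟩
  have h1 := gterm_finset_bound V W v Λ Γ hΓ f t
  have h2 : ∑ i ∈ t, v i ^ 2 * ‖Λ i (proj (V i) f)‖ ^ 2 ≤ (ε / C) ^ 2 := by
    have h := hs t ht
    rw [Real.norm_eq_abs] at h
    have := le_abs_self (∑ i ∈ t, v i ^ 2 * ‖Λ i (proj (V i) f)‖ ^ 2)
    linarith
  have h3 : Real.sqrt (∑ i ∈ t, v i ^ 2 * ‖Λ i (proj (V i) f)‖ ^ 2) ≤ ε / C := by
    rw [← Real.sqrt_sq (le_of_lt (div_pos hε hC0))]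
    exact Real.sqrt_le_sqrt h2
  calc ‖∑ i ∈ t, gterm V W v Λ Γ f i‖
      ≤ Real.sqrt (max B₂ 0) * Real.sqrt (∑ i ∈ t, v i ^ 2 * ‖Λ i (proj (V i) f)‖ ^ 2) := h1
    _ ≤ Real.sqrt (max B₂ 0) * (ε / C) := mul_le_mul_of_nonneg_left h3 (Real.sqrt_nonneg _)
    _ < C * (ε / C) := mul_lt_mul_of_pos_right (lt_add_one _) (div_pos hε hC0)
    _ = ε := by field_simp

lemma norm_tsum_gterm_le {B₁ B₂ : ℝ} (hΛ : GFusionBessel V v Λ B₁)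
    (hΓ : GFusionBessel W v Γ B₂) (f : H) :
    ‖∑' i, gterm V W v Λ Γ f i‖ ≤
      (Real.sqrt (max B₂ 0) * Real.sqrt (max B₁ 0)) * ‖f‖ := by
  have hs := (summable_gterm V W v Λ Γ hΛ hΓ f).hasSum
  refine le_of_tendsto' (Filter.Tendsto.norm hs) fun t => ?_
  have h1 := gterm_finset_bound V W v Λ Γ hΓ f t
  have h2 : ∑ i ∈ t, v i ^ 2 * ‖Λ i (proj (V i) f)‖ ^ 2 ≤ max B₁ 0 * ‖f‖ ^ 2 := by
    have ha := (hΛ f).1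
    have hb := (hΛ f).2
    have h3 : ∑ i ∈ t, v i ^ 2 * ‖Λ i (proj (V i) f)‖ ^ 2 ≤
        ∑' i, v i ^ 2 * ‖Λ i (proj (V i) f)‖ ^ 2 :=
      Summable.sum_le_tsum t (fun i _ => by positivity) ha
    have h4 : B₁ * ‖f‖ ^ 2 ≤ max B₁ 0 * ‖f‖ ^ 2 :=
      mul_le_mul_of_nonneg_right (le_max_left _ _) (by positivity)
    linarith
  have h3 : Real.sqrt (∑ i ∈ t, v i ^ 2 * ‖Λ i (proj (V i) f)‖ ^ 2) ≤
      Real.sqrt (max B₁ 0) * ‖f‖ := by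
    calc Real.sqrt (∑ i ∈ t, v i ^ 2 * ‖Λ i (proj (V i) f)‖ ^ 2)
        ≤ Real.sqrt (max B₁ 0 * ‖f‖ ^ 2) := Real.sqrt_le_sqrt h2
      _ = Real.sqrt (max B₁ 0) * ‖f‖ := by
          rw [Real.sqrt_mul (le_max_right B₁ 0), Real.sqrt_sq (norm_nonneg f)]
  calc ‖∑ i ∈ t, gterm V W v Λ Γ f i‖
      ≤ Real.sqrt (max B₂ 0) * Real.sqrt (∑ i ∈ t, v i ^ 2 * ‖Λ i (proj (V i) f)‖ ^ 2) := h1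
    _ ≤ Real.sqrt (max B₂ 0) * (Real.sqrt (max B₁ 0) * ‖f‖) :=
        mul_le_mul_of_nonneg_left h3 (Real.sqrt_nonneg _)
    _ = (Real.sqrt (max B₂ 0) * Real.sqrt (max B₁ 0)) * ‖f‖ := by ring

/-- The bi-g-fusion frame operator as a continuous linear map. -/
noncomputable def Sop {B₁ B₂ : ℝ} (hΛ : GFusionBessel V v Λ B₁)
    (hΓ : GFusionBessel W v Γ B₂) : H →L[ℝ] H :=
  LinearMap.mkContinuous
    { toFun := fun f => ∑' i, gterm V W v Λ Γ f i
      map_add' := fun f f' => by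
        have h : (fun i => gterm V W v Λ Γ (f + f') i) =
            fun i => gterm V W v Λ Γ f i + gterm V W v Λ Γ f' i := by
          funext i; simp only [gterm, map_add, smul_add]
        show (∑' i, gterm V W v Λ Γ (f + f') i) = _
        rw [h]
        exact Summable.tsum_add (summable_gterm V W v Λ Γ hΛ hΓ f) (summable_gterm V W v Λ Γ hΛ hΓ f')
      map_smul' := fun c f => by
        have h : (fun i => gterm V W v Λ Γ (c • f) i) =
            fun i => c • gterm V W v Λ Γ f i := by
          funext i; simp only [gterm, map_smul]; rw [smul_comm]
        show (∑' i, gterm V W v Λ Γ (c • f) i) = c • ∑' i, gterm V W v Λ Γ f i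
        rw [h]
        exact ((summable_gterm V W v Λ Γ hΛ hΓ f).hasSum.const_smul c).tsum_eq }
    (Real.sqrt (max B₂ 0) * Real.sqrt (max B₁ 0))
    (fun f => norm_tsum_gterm_le V W v Λ Γ hΛ hΓ f)

lemma Sop_apply {B₁ B₂ : ℝ} (hΛ : GFusionBessel V v Λ B₁)
    (hΓ : GFusionBessel W v Γ B₂) (f : H) :
    Sop V W v Λ Γ hΛ hΓ f = ∑' i, gterm V W v Λ Γ f i := rfl

end Aux

/-- For g-fusion Bessel sequences `Λ`, `Γ` with bi-g-fusion frame operator `S_{Λ,Γ}`, the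
following are equivalent: (i) `S_{Λ,Γ}` is bounded below; (ii) there is a bounded operator
`K₀ : H → H` such that the operators `T i = v i² K₀ P_{W i} (Γ i)* (Λ i) P_{V i}` form a
resolution of the identity on `H`. -/
theorem stmt10 {H : Type*} [NormedAddCommGroup H] [InnerProductSpace ℝ H] [CompleteSpace H]
    {I : Type*} [Countable I] {K : I → Type*} [∀ i, NormedAddCommGroup (K i)]
    [∀ i, InnerProductSpace ℝ (K i)] [∀ i, CompleteSpace (K i)]
    (V W : I → Submodule ℝ H) [∀ i, CompleteSpace (V i)] [∀ i, CompleteSpace (W i)]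
    (v : I → ℝ) (hv : ∀ i, 0 < v i) (Λ Γ : ∀ i, H →L[ℝ] K i) (B₁ B₂ : ℝ)
    (hΛ : GFusionBessel V v Λ B₁) (hΓ : GFusionBessel W v Γ B₂) :
    (∃ c : ℝ, 0 < c ∧ ∀ f : H,
        c * ‖f‖
          ≤ ‖∑' i, v i ^ 2 • proj (W i) (ContinuousLinearMap.adjoint (Γ i) (Λ i (proj (V i) f)))‖) ↔
      (∃ K₀ : H →L[ℝ] H, ∀ f : H,
        HasSum (fun i =>
          v i ^ 2 • K₀ (proj (W i) (ContinuousLinearMap.adjoint (Γ i) (Λ i (proj (V i) f))))) f) := by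
  constructor
  · rintro ⟨c, hc, hlow⟩
    set S := Sop V W v Λ Γ hΛ hΓ with hSdef
    have hlow' : ∀ f : H, c * ‖f‖ ≤ ‖S f‖ := fun f => hlow f
    have hanti : AntilipschitzWith (Real.toNNReal c⁻¹) S := by
      apply S.antilipschitz_of_bound
      intro x
      have h := hlow' x
      have hco : ((Real.toNNReal c⁻¹ : NNReal) : ℝ) = c⁻¹ :=
        Real.coe_toNNReal _ (by positivity)
      rw [hco]
      calc ‖x‖ = c⁻¹ * (c * ‖x‖) := by field_simp
        _ ≤ c⁻¹ * ‖S x‖ := mul_le_mul_of_nonneg_left h (by positivity)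
    have hinj : Function.Injective S := hanti.injective
    have hclo : IsClosed (Set.range S) := hanti.isClosed_range S.uniformContinuous
    have hclo' : IsClosed ((LinearMap.range (S : H →ₗ[ℝ] H) : Submodule ℝ H) : Set H) := by
      rw [LinearMap.coe_range]; exact hclo
    haveI : CompleteSpace (LinearMap.range (S : H →ₗ[ℝ] H)) := hclo'.completeSpace_coe
    set e := S.equivRange hinj hclo with hedef
    set K₀ : H →L[ℝ] H :=
      ((e.symm : LinearMap.range (S : H →ₗ[ℝ] H) ≃L[ℝ] H) : LinearMap.range (S : H →ₗ[ℝ] H) →L[ℝ] H).comp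
        (LinearMap.range (S : H →ₗ[ℝ] H)).orthogonalProjectionOnto with hK₀def
    have hKS : ∀ f : H, K₀ (S f) = f := by
      intro f
      have hmem : S f ∈ LinearMap.range (S : H →ₗ[ℝ] H) := LinearMap.mem_range_self (S : H →ₗ[ℝ] H) f
      have h1 : (((LinearMap.range (S : H →ₗ[ℝ] H)).orthogonalProjectionOnto (S f)) : H) = S f :=
        Submodule.starProjection_eq_self_iff.2 hmem
      have h2 : (LinearMap.range (S : H →ₗ[ℝ] H)).orthogonalProjectionOnto (S f) = e f := by
        apply Subtype.ext
        rw [h1]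
        rfl
      show ((e.symm : LinearMap.range (S : H →ₗ[ℝ] H) ≃L[ℝ] H) : LinearMap.range (S : H →ₗ[ℝ] H) →L[ℝ] H)
          ((LinearMap.range (S : H →ₗ[ℝ] H)).orthogonalProjectionOnto (S f)) = f
      rw [h2]
      simp
    refine ⟨K₀, fun f => ?_⟩
    have hh : HasSum (fun i => K₀ (gterm V W v Λ Γ f i))
        (K₀ (∑' i, gterm V W v Λ Γ f i)) :=
      (summable_gterm V W v Λ Γ hΛ hΓ f).hasSum.mapL K₀
    have heq : (fun i => v i ^ 2 • K₀ (proj (W i)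
        (ContinuousLinearMap.adjoint (Γ i) (Λ i (proj (V i) f))))) =
        fun i => K₀ (gterm V W v Λ Γ f i) := by
      funext i; simp only [gterm, map_smul]
    rw [heq]
    have hts : K₀ (∑' i, gterm V W v Λ Γ f i) = f := hKS f
    rwa [hts] at hh
  · rintro ⟨K₀, hK⟩
    refine ⟨(‖K₀‖ + 1)⁻¹, by positivity, fun f => ?_⟩
    have hsum := summable_gterm V W v Λ Γ hΛ hΓ f
    have h1 : HasSum (fun i => K₀ (gterm V W v Λ Γ f i))
        (K₀ (∑' i, gterm V W v Λ Γ f i)) := hsum.hasSum.mapL K₀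
    have h2 : HasSum (fun i => K₀ (gterm V W v Λ Γ f i)) f := by
      have hKf := hK f
      have heq : (fun i => v i ^ 2 • K₀ (proj (W i)
          (ContinuousLinearMap.adjoint (Γ i) (Λ i (proj (V i) f))))) =
          fun i => K₀ (gterm V W v Λ Γ f i) := by
        funext i; simp only [gterm, map_smul]
      rwa [heq] at hKf
    have h3 : K₀ (∑' i, gterm V W v Λ Γ f i) = f := h1.unique h2
    have h4 : ‖f‖ = ‖K₀ (∑' i, gterm V W v Λ Γ f i)‖ := by rw [h3]
    have hb := K₀.le_opNorm (∑' i, gterm V W v Λ Γ f i)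
    show (‖K₀‖ + 1)⁻¹ * ‖f‖ ≤ ‖∑' i, gterm V W v Λ Γ f i‖
    calc (‖K₀‖ + 1)⁻¹ * ‖f‖
        ≤ (‖K₀‖ + 1)⁻¹ * ((‖K₀‖ + 1) * ‖∑' i, gterm V W v Λ Γ f i‖) := by
          apply mul_le_mul_of_nonneg_left _ (by positivity)
          rw [h4]
          nlinarith [norm_nonneg (∑' i, gterm V W v Λ Γ f i), hb]
      _ = ‖∑' i, gterm V W v Λ Γ f i‖ := by field_simp
end

section
/- Let U : H → H be a bounded invertible linear operator (with bounded inverse U^{-1}) and let (Λ, Γ) be a bi-g-fusion frame for H with bounds A and B. Then the pair ({(U V_i, Λ_i P_{V_i} U*, v_i)}_{i∈I}, {(U W_i, Γ_i P_{W_i} U*, v_i)}_{i∈I}) is a bi-g-fusion frame for H with bounds A‖U^{-1}‖^{-2} and B‖U‖²; that is, for every f ∈ H, A‖U^{-1}‖^{-2}‖f‖² ≤ Σ_{i∈I} v_i² ⟨Λ_i P_{V_i} U* P_{U V_i} f, Γ_i P_{W_i} U* P_{U W_i} f⟩ ≤ B‖U‖²‖f‖². (Here U V_i and U W_i are closed subspaces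 of H since U is invertible.) -/
open scoped RealInnerProductSpace

lemma proj_key {H : Type*} [NormedAddCommGroup H] [InnerProductSpace ℝ H] [CompleteSpace H]
    (V : Submodule ℝ H) [CompleteSpace V] (U : H ≃L[ℝ] H) (f : H) :
    proj V (ContinuousLinearMap.adjoint (U : H →L[ℝ] H)
      (proj ((V.map ((U : H →L[ℝ] H) : H →ₗ[ℝ] H)).topologicalClosure) f))
    = proj V (ContinuousLinearMap.adjoint (U : H →L[ℝ] H) f) := by
  set S := (V.map ((U : H →L[ℝ] H) : H →ₗ[ℝ] H)).topologicalClosure with hS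
  have hmem : ContinuousLinearMap.adjoint (U : H →L[ℝ] H) (proj S f - f) ∈ Vᗮ := by
    intro v hv
    rw [ContinuousLinearMap.adjoint_inner_right]
    have hUv : (U : H →L[ℝ] H) v ∈ S :=
      Submodule.le_topologicalClosure _ (Submodule.mem_map_of_mem hv)
    have h2 : proj S f - f ∈ Sᗮ := by
      have := Sᗮ.neg_mem (Submodule.sub_starProjection_mem_orthogonal (K := S) f)
      rw [neg_sub] at this
      exact this
    exact h2 _ hUv
  have h0 : V.orthogonalProjectionOnto (ContinuousLinearMap.adjoint (U : H →L[ℝ] H) (proj S f)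
      - ContinuousLinearMap.adjoint (U : H →L[ℝ] H) f) = 0 := by
    rw [← map_sub]
    exact Submodule.orthogonalProjectionOnto_apply_of_mem_orthogonal hmem
  rw [map_sub, sub_eq_zero] at h0
  simp only [proj, ContinuousLinearMap.comp_apply]
  exact congrArg _ h0

lemma adjoint_symm_adjoint {H : Type*} [NormedAddCommGroup H] [InnerProductSpace ℝ H]
    [CompleteSpace H] (U : H ≃L[ℝ] H) (f : H) :
    ContinuousLinearMap.adjoint (U.symm : H →L[ℝ] H)
      (ContinuousLinearMap.adjoint (U : H →L[ℝ] H) f) = f := by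
  rw [← ContinuousLinearMap.comp_apply, ← ContinuousLinearMap.adjoint_comp]
  have : ((U : H →L[ℝ] H).comp (U.symm : H →L[ℝ] H)) = ContinuousLinearMap.id ℝ H := by
    ext x; simp
  rw [this, ContinuousLinearMap.adjoint_id, ContinuousLinearMap.id_apply]

/-- If `U : H → H` is bounded and invertible with bounded inverse and `(Λ, Γ)` is a
bi-g-fusion frame for `H` with bounds `A`, `B`, then
`({(U V i, Λ i P_{V i} U*, v i)}, {(U W i, Γ i P_{W i} U*, v i)})` is a bi-g-fusion frame
for `H` with bounds `A‖U⁻¹‖⁻²` and `B‖U‖²`.  (Since `U` is invertible, `U V i` and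
`U W i` are closed, i.e. they coincide with their topological closures.) -/
theorem stmt11 {H : Type*} [NormedAddCommGroup H] [InnerProductSpace ℝ H] [CompleteSpace H]
    {I : Type*} [Countable I] {K : I → Type*} [∀ i, NormedAddCommGroup (K i)]
    [∀ i, InnerProductSpace ℝ (K i)] [∀ i, CompleteSpace (K i)]
    (V W : I → Submodule ℝ H) [∀ i, CompleteSpace (V i)] [∀ i, CompleteSpace (W i)]
    (v : I → ℝ) (hv : ∀ i, 0 < v i) (Λ Γ : ∀ i, H →L[ℝ] K i) (A B : ℝ)
    (hframe : BiGFusionFrame V W v Λ Γ A B) (U : H ≃L[ℝ] H) :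
    ∀ f : H,
      Summable (fun i =>
        v i ^ 2 * ⟪Λ i (proj (V i) (ContinuousLinearMap.adjoint (U : H →L[ℝ] H)
            (proj ((V i).map ((U : H →L[ℝ] H) : H →ₗ[ℝ] H)).topologicalClosure f))),
          Γ i (proj (W i) (ContinuousLinearMap.adjoint (U : H →L[ℝ] H)
            (proj ((W i).map ((U : H →L[ℝ] H) : H →ₗ[ℝ] H)).topologicalClosure f)))⟫) ∧
      A * (‖(U.symm : H →L[ℝ] H)‖ ^ 2)⁻¹ * ‖f‖ ^ 2
        ≤ ∑' i, v i ^ 2 * ⟪Λ i (proj (V i) (ContinuousLinearMap.adjoint (U : H →L[ℝ] H)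
            (proj ((V i).map ((U : H →L[ℝ] H) : H →ₗ[ℝ] H)).topologicalClosure f))),
          Γ i (proj (W i) (ContinuousLinearMap.adjoint (U : H →L[ℝ] H)
            (proj ((W i).map ((U : H →L[ℝ] H) : H →ₗ[ℝ] H)).topologicalClosure f)))⟫ ∧
      ∑' i, v i ^ 2 * ⟪Λ i (proj (V i) (ContinuousLinearMap.adjoint (U : H →L[ℝ] H)
            (proj ((V i).map ((U : H →L[ℝ] H) : H →ₗ[ℝ] H)).topologicalClosure f))),
          Γ i (proj (W i) (ContinuousLinearMap.adjoint (U : H →L[ℝ] H)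
            (proj ((W i).map ((U : H →L[ℝ] H) : H →ₗ[ℝ] H)).topologicalClosure f)))⟫
        ≤ B * ‖(U : H →L[ℝ] H)‖ ^ 2 * ‖f‖ ^ 2 := by
  obtain ⟨hA, hAB, hfr⟩ := hframe
  intro f
  obtain ⟨hsum, hlow, hup⟩ := hfr (ContinuousLinearMap.adjoint (U : H →L[ℝ] H) f)
  have hgU : ‖ContinuousLinearMap.adjoint (U : H →L[ℝ] H) f‖ ≤ ‖(U : H →L[ℝ] H)‖ * ‖f‖ := by
    calc ‖ContinuousLinearMap.adjoint (U : H →L[ℝ] H) f‖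
        ≤ ‖ContinuousLinearMap.adjoint (U : H →L[ℝ] H)‖ * ‖f‖ :=
          ContinuousLinearMap.le_opNorm _ _
      _ = ‖(U : H →L[ℝ] H)‖ * ‖f‖ := by rw [ContinuousLinearMap.adjoint.norm_map]
  have hfg : ‖f‖ ≤ ‖(U.symm : H →L[ℝ] H)‖ * ‖ContinuousLinearMap.adjoint (U : H →L[ℝ] H) f‖ := by
    calc ‖f‖ = ‖ContinuousLinearMap.adjoint (U.symm : H →L[ℝ] H)
          (ContinuousLinearMap.adjoint (U : H →L[ℝ] H) f)‖ := by
            rw [adjoint_symm_adjoint]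
      _ ≤ ‖ContinuousLinearMap.adjoint (U.symm : H →L[ℝ] H)‖ *
            ‖ContinuousLinearMap.adjoint (U : H →L[ℝ] H) f‖ :=
          ContinuousLinearMap.le_opNorm _ _
      _ = _ := by rw [ContinuousLinearMap.adjoint.norm_map]
  simp only [proj_key]
  refine ⟨hsum, ?_, ?_⟩
  · refine le_trans ?_ hlow
    rw [mul_assoc]
    refine mul_le_mul_of_nonneg_left ?_ hA.le
    rcases eq_or_lt_of_le (norm_nonneg (U.symm : H →L[ℝ] H)) with h0 | h0
    · have hf0 : ‖f‖ = 0 := le_antisymm (by rw [← h0, zero_mul] at hfg; exact hfg) (norm_nonneg f)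
      simp [hf0]
    · rw [inv_mul_le_iff₀ (by positivity)]
      nlinarith [norm_nonneg f, norm_nonneg (ContinuousLinearMap.adjoint (U : H →L[ℝ] H) f)]
  · refine le_trans hup ?_
    have hB : 0 < B := lt_of_lt_of_le hA hAB
    have h2 : ‖ContinuousLinearMap.adjoint (U : H →L[ℝ] H) f‖ ^ 2
        ≤ (‖(U : H →L[ℝ] H)‖ * ‖f‖) ^ 2 := pow_le_pow_left₀ (norm_nonneg _) hgU 2
    nlinarith [h2, hB.le]
end

section
/- Let (Λ, Γ) be a bi-g-fusion frame for H, with Λ and Γ g-fusion Bessel sequences, and suppose the bi-g-fusion frame operator S = S_{Λ,Γ} (given by S f = Σ_{i∈I} v_i² P_{W_i} Γ_i* Λ_i P_{V_i} f) is bijective with bounded inverse S^{-1}. Then the pair ({((S^{-1})* V_i, Λ_i P_{V_i} S^{-1}, v_i)}_{i∈I}, {((S^{-1})* W_i, Γ_i P_{W_i} S^{-1}, v_i)}_{i∈I}) is a bi-g-fusion frame for H; that is, there exist constants 0 < A' ≤ B' such that for all f ∈ H, A'‖f‖² ≤ Σ_{i∈I} v_i² ⟨Λ_i P_{V_i} S^{-1}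 P_{(S^{-1})* V_i} f, Γ_i P_{W_i} S^{-1} P_{(S^{-1})* W_i} f⟩ ≤ B'‖f‖². -/
open scoped RealInnerProductSpace

/-- Key identity: `P_V ∘ T ∘ P_{closure (T* V)} = P_V ∘ T`. -/
lemma proj_comp_closure {H : Type*} [NormedAddCommGroup H] [InnerProductSpace ℝ H]
    [CompleteSpace H] (V : Submodule ℝ H) [CompleteSpace V] (T : H →L[ℝ] H) (f : H) :
    proj V (T (proj ((V.map (ContinuousLinearMap.adjoint T : H →ₗ[ℝ] H)).topologicalClosure) f)) =
      proj V (T f) := by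
  set M := (V.map (ContinuousLinearMap.adjoint T : H →ₗ[ℝ] H)).topologicalClosure with hM
  have h1 : f - proj M f ∈ Mᗮ := by
    have := M.sub_starProjection_mem_orthogonal f
    rwa [Submodule.starProjection_apply] at this
  have h2 : T f - T (proj M f) ∈ Vᗮ := by
    rw [← map_sub, Submodule.mem_orthogonal']
    intro x hx
    have hm : ContinuousLinearMap.adjoint T x ∈ M :=
      Submodule.le_topologicalClosure _ (Submodule.mem_map_of_mem hx)
    calc ⟪T (f - proj M f), x⟫
        = ⟪f - proj M f, ContinuousLinearMap.adjoint T x⟫ :=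
          (ContinuousLinearMap.adjoint_inner_right T _ _).symm
      _ = 0 := by
          rw [real_inner_comm]
          exact (Submodule.mem_orthogonal M _).mp h1 _ hm
  have h3 : V.orthogonalProjectionOnto (T f - T (proj M f)) = 0 :=
    Submodule.orthogonalProjectionOnto_apply_of_mem_orthogonal h2
  have h4 : proj V (T f) - proj V (T (proj M f)) = 0 := by
    rw [← map_sub]
    simp only [proj, ContinuousLinearMap.comp_apply, Submodule.subtypeL_apply] at h3 ⊢
    rw [h3, Submodule.coe_zero]
  rw [sub_eq_zero] at h4
  exact h4.symm

/-- Termwise identity for the inner product against the frame-operator summand. -/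
lemma inner_term {H : Type*} [NormedAddCommGroup H] [InnerProductSpace ℝ H] [CompleteSpace H]
    {K : Type*} [NormedAddCommGroup K] [InnerProductSpace ℝ K] [CompleteSpace K]
    (W : Submodule ℝ H) [CompleteSpace W] (Γ : H →L[ℝ] K) (f : H) (a : K) (c : ℝ) :
    ⟪f, c • proj W (ContinuousLinearMap.adjoint Γ a)⟫ = c * ⟪a, Γ (proj W f)⟫ := by
  rw [real_inner_smul_right]
  congr 1
  calc ⟪f, proj W (ContinuousLinearMap.adjoint Γ a)⟫
      = ⟪proj W f, ContinuousLinearMap.adjoint Γ a⟫ := by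
        simp only [proj, ContinuousLinearMap.comp_apply, Submodule.subtypeL_apply]
        exact (W.inner_starProjection_left_eq_right _ _).symm
    _ = ⟪Γ (proj W f), a⟫ := ContinuousLinearMap.adjoint_inner_right Γ _ _
    _ = ⟪a, Γ (proj W f)⟫ := real_inner_comm _ _

/-- If `(Λ, Γ)` is a bi-g-fusion frame for `H` (with `Λ`, `Γ` g-fusion Bessel) whose frame
operator `S = S_{Λ,Γ}` is bijective with bounded inverse `Sinv`, then the canonical dual pair
`({((S⁻¹)* V i, Λ i P_{V i} S⁻¹, v i)}, {((S⁻¹)* W i, Γ i P_{W i} S⁻¹, v i)})` is a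
bi-g-fusion frame for `H`.  (`(S⁻¹)* V i` is identified with its topological closure.) -/
theorem stmt12 {H : Type*} [NormedAddCommGroup H] [InnerProductSpace ℝ H] [CompleteSpace H]
    {I : Type*} [Countable I] {K : I → Type*} [∀ i, NormedAddCommGroup (K i)]
    [∀ i, InnerProductSpace ℝ (K i)] [∀ i, CompleteSpace (K i)]
    (V W : I → Submodule ℝ H) [∀ i, CompleteSpace (V i)] [∀ i, CompleteSpace (W i)]
    (v : I → ℝ) (hv : ∀ i, 0 < v i) (Λ Γ : ∀ i, H →L[ℝ] K i) (A B B₁ B₂ : ℝ)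
    (hframe : BiGFusionFrame V W v Λ Γ A B)
    (hΛ : GFusionBessel V v Λ B₁) (hΓ : GFusionBessel W v Γ B₂)
    (Sinv : H →L[ℝ] H)
    (hleft : ∀ f : H,
      Sinv (∑' i, v i ^ 2 • proj (W i) (ContinuousLinearMap.adjoint (Γ i) (Λ i (proj (V i) f)))) = f)
    (hright : ∀ f : H,
      (∑' i, v i ^ 2 • proj (W i) (ContinuousLinearMap.adjoint (Γ i) (Λ i (proj (V i) (Sinv f))))) = f) :
    ∃ A' B' : ℝ, 0 < A' ∧ A' ≤ B' ∧ ∀ f : H,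
      Summable (fun i =>
        v i ^ 2 * ⟪Λ i (proj (V i) (Sinv
            (proj ((V i).map (ContinuousLinearMap.adjoint Sinv : H →ₗ[ℝ] H)).topologicalClosure f))),
          Γ i (proj (W i) (Sinv
            (proj ((W i).map (ContinuousLinearMap.adjoint Sinv : H →ₗ[ℝ] H)).topologicalClosure f)))⟫) ∧
      A' * ‖f‖ ^ 2
        ≤ ∑' i, v i ^ 2 * ⟪Λ i (proj (V i) (Sinv
            (proj ((V i).map (ContinuousLinearMap.adjoint Sinv : H →ₗ[ℝ] H)).topologicalClosure f))),
          Γ i (proj (W i) (Sinv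
            (proj ((W i).map (ContinuousLinearMap.adjoint Sinv : H →ₗ[ℝ] H)).topologicalClosure f)))⟫ ∧
      ∑' i, v i ^ 2 * ⟪Λ i (proj (V i) (Sinv
            (proj ((V i).map (ContinuousLinearMap.adjoint Sinv : H →ₗ[ℝ] H)).topologicalClosure f))),
          Γ i (proj (W i) (Sinv
            (proj ((W i).map (ContinuousLinearMap.adjoint Sinv : H →ₗ[ℝ] H)).topologicalClosure f)))⟫
        ≤ B' * ‖f‖ ^ 2 := by
  obtain ⟨hA, hAB, hfr⟩ := hframe
  set B₁' : ℝ := max B₁ 1 with hB1def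
  set B₂' : ℝ := max B₂ 1 with hB2def
  have hB₁' : (1:ℝ) ≤ B₁' := le_max_right _ _
  have hB₂' : (1:ℝ) ≤ B₂' := le_max_right _ _
  -- key norm estimate : ‖f‖² ≤ B₁' B₂' ‖Sinv f‖²
  have key : ∀ f : H, ‖f‖ ^ 2 ≤ B₁' * B₂' * ‖Sinv f‖ ^ 2 := by
    intro f
    by_cases hf : f = 0
    · simp only [hf, norm_zero, map_zero]
      simp
    · set g := Sinv f with hg
      have hsum : Summable (fun i =>
          v i ^ 2 • proj (W i) (ContinuousLinearMap.adjoint (Γ i) (Λ i (proj (V i) g)))) := by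
        by_contra hns
        have h := hright f
        rw [tsum_eq_zero_of_not_summable hns] at h
        exact hf h.symm
      -- expand ‖f‖²
      have expand : ‖f‖ ^ 2 = ∑' i, v i ^ 2 * ⟪Λ i (proj (V i) g), Γ i (proj (W i) f)⟫ := by
        have h0 : ‖f‖ ^ 2 = (innerSL ℝ f) (∑' i,
            v i ^ 2 • proj (W i) (ContinuousLinearMap.adjoint (Γ i) (Λ i (proj (V i) g)))) := by
          rw [hright f]
          simp [real_inner_self_eq_norm_sq]
        rw [h0, ContinuousLinearMap.map_tsum _ hsum]
        exact tsum_congr fun i => inner_term (W i) (Γ i) f (Λ i (proj (V i) g)) (v i ^ 2)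
      have hc : Summable (fun i => v i ^ 2 * ⟪Λ i (proj (V i) g), Γ i (proj (W i) f)⟫) := by
        have := hsum.mapL (innerSL ℝ f)
        refine this.congr fun i => ?_
        exact inner_term (W i) (Γ i) f (Λ i (proj (V i) g)) (v i ^ 2)
      have hu := (hΛ g).1
      have hw := (hΓ f).1
      have step : ∑' i, (2 * B₂') * (v i ^ 2 * ⟪Λ i (proj (V i) g), Γ i (proj (W i) f)⟫)
          ≤ ∑' i, (B₂' ^ 2 * (v i ^ 2 * ‖Λ i (proj (V i) g)‖ ^ 2)
              + v i ^ 2 * ‖Γ i (proj (W i) f)‖ ^ 2) := by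
        refine Summable.tsum_le_tsum (fun i => ?_) (hc.mul_left _) ((hu.mul_left _).add hw)
        have h1 := real_inner_le_norm (Λ i (proj (V i) g)) (Γ i (proj (W i) f))
        have h2 := mul_le_mul_of_nonneg_left h1
          (by nlinarith [sq_nonneg (v i)] : (0:ℝ) ≤ 2 * B₂' * v i ^ 2)
        nlinarith [h2, mul_nonneg (sq_nonneg (v i))
            (sq_nonneg (B₂' * ‖Λ i (proj (V i) g)‖ - ‖Γ i (proj (W i) f)‖))]
      rw [tsum_mul_left, ← expand] at step
      rw [Summable.tsum_add (hu.mul_left _) hw, tsum_mul_left] at step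
      have hU : ∑' i, v i ^ 2 * ‖Λ i (proj (V i) g)‖ ^ 2 ≤ B₁' * ‖g‖ ^ 2 :=
        le_trans (hΛ g).2 (by nlinarith [sq_nonneg ‖g‖, le_max_left B₁ (1:ℝ)])
      have hW : ∑' i, v i ^ 2 * ‖Γ i (proj (W i) f)‖ ^ 2 ≤ B₂' * ‖f‖ ^ 2 :=
        le_trans (hΓ f).2 (by nlinarith [sq_nonneg ‖f‖, le_max_left B₂ (1:ℝ)])
      nlinarith [step, hU, hW, sq_nonneg ‖f‖, sq_nonneg ‖g‖]
  refine ⟨A / (B₁' * B₂'), max (B * ‖Sinv‖ ^ 2) (A / (B₁' * B₂')),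
    div_pos hA (by nlinarith), le_max_right _ _, fun f => ?_⟩
  obtain ⟨hs, hl, hr⟩ := hfr (Sinv f)
  have hrw : (fun i =>
      v i ^ 2 * ⟪Λ i (proj (V i) (Sinv
          (proj ((V i).map (ContinuousLinearMap.adjoint Sinv : H →ₗ[ℝ] H)).topologicalClosure f))),
        Γ i (proj (W i) (Sinv
          (proj ((W i).map (ContinuousLinearMap.adjoint Sinv : H →ₗ[ℝ] H)).topologicalClosure f)))⟫)
      = fun i => v i ^ 2 * ⟪Λ i (proj (V i) (Sinv f)), Γ i (proj (W i) (Sinv f))⟫ := by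
    funext i
    rw [proj_comp_closure (V i) Sinv f, proj_comp_closure (W i) Sinv f]
  rw [hrw]
  refine ⟨hs, ?_, ?_⟩
  · refine le_trans ?_ hl
    have hk := key f
    have hpos : (0:ℝ) < B₁' * B₂' := by nlinarith
    rw [div_mul_eq_mul_div, div_le_iff₀ hpos]
    nlinarith
  · refine le_trans hr ?_
    have h1 : ‖Sinv f‖ ≤ ‖Sinv‖ * ‖f‖ := Sinv.le_opNorm f
    have hB : (0:ℝ) < B := lt_of_lt_of_le hA hAB
    have h1sq : ‖Sinv f‖ ^ 2 ≤ (‖Sinv‖ * ‖f‖) ^ 2 :=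
      pow_le_pow_left₀ (norm_nonneg _) h1 2
    have h2 : B * ‖Sinv f‖ ^ 2 ≤ (B * ‖Sinv‖ ^ 2) * ‖f‖ ^ 2 := by nlinarith [h1sq]
    exact le_trans h2 (mul_le_mul_of_nonneg_right (le_max_left _ _) (by positivity))
end
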